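/- arXiv:2110.01020 — 3 statements merged into one kernel-verified Lean document; each statement's English description precedes it below -/
import Mathlib

section
/- Let V and H be real Hilbert spaces, let j : V → H be a continuous linear map which is a compact operator, let a : V × V → ℝ be a continuous symmetric bilinear form, and let ω ∈ ℝ, c > 0 satisfy a(u,u) + ω⟨j u, j u⟩_H ≥ c‖u‖_V² for all u ∈ V. Then there exists a continuous linear operator T : H → H which is a compact operator and such that for every y ∈ H there is x ∈ V with T y = j x and a(x,u) + ω⟨j x, j u⟩_H = ⟨y, j u⟩_H for all u ∈ V. -/
open scoped RealInnerProductSpace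

/-- Compact resolvent (Lemma A.2): if moreover `j` is a compact operator, then
there is a compact continuous linear operator `T : H → H` such that for every
`y ∈ H`, `T y = j x` where `x ∈ V` solves
`a(x,u) + ω⟨jx, ju⟩ = ⟨y, ju⟩` for all `u ∈ V`. -/
theorem stmt3 {V H : Type*}
    [NormedAddCommGroup V] [InnerProductSpace ℝ V] [CompleteSpace V]
    [NormedAddCommGroup H] [InnerProductSpace ℝ H] [CompleteSpace H]
    (j : V →L[ℝ] H) (hj : IsCompactOperator j)
    (a : V →L[ℝ] V →L[ℝ] ℝ) (hsymm : ∀ u v : V, a u v = a v u)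
    (ω c : ℝ) (hc : 0 < c)
    (hell : ∀ u : V, c * ‖u‖ ^ 2 ≤ a u u + ω * ⟪j u, j u⟫) :
    ∃ T : H →L[ℝ] H, IsCompactOperator T ∧
      ∀ y : H, ∃ x : V, T y = j x ∧
        ∀ u : V, a x u + ω * ⟪j x, j u⟫ = ⟪y, j u⟫ := by
  set B : V →L[ℝ] V →L[ℝ] ℝ :=
    a + ω • ((innerSL ℝ).bilinearComp j j : V →L[ℝ] V →L[ℝ] ℝ) with hB
  have hBapp : ∀ u v : V, B u v = a u v + ω * ⟪j u, j v⟫ := by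
    intro u v; simp [hB]
  have hcoer : IsCoercive B := by
    refine ⟨c, hc, fun u => ?_⟩
    calc c * ‖u‖ * ‖u‖ = c * ‖u‖ ^ 2 := by ring
    _ ≤ a u u + ω * ⟪j u, j u⟫ := hell u
    _ = B u u := (hBapp u u).symm
  set E := hcoer.continuousLinearEquivOfBilin
  refine ⟨j ∘L (E.symm : V →L[ℝ] V) ∘L (ContinuousLinearMap.adjoint j),
    hj.comp_clm _, fun y => ?_⟩
  refine ⟨E.symm (ContinuousLinearMap.adjoint j y), rfl, fun u => ?_⟩
  have h1 := hcoer.continuousLinearEquivOfBilin_apply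
    (E.symm (ContinuousLinearMap.adjoint j y)) u
  rw [← hBapp, ← h1]
  rw [show E (E.symm (ContinuousLinearMap.adjoint j y))
      = ContinuousLinearMap.adjoint j y from E.apply_symm_apply _]
  rw [ContinuousLinearMap.adjoint_inner_left]
end

section
/- Let V and H be real Hilbert spaces, let j : V → H be an injective continuous linear map with dense range, let a : V × V → ℝ be a continuous symmetric bilinear form, and let ω ∈ ℝ, c > 0 satisfy a(u,u) + ω⟨j u, j u⟩_H ≥ c‖u‖_V² for all u ∈ V. Suppose T : H → H is a map such that for every y ∈ H there is x ∈ V with T y = j x and a(x,u) + ω⟨j x, j u⟩_H = ⟨y, j u⟩_H for all u ∈ V. Then T is symmetric, i.e. ⟨T y, z⟩_H = ⟨y, T z⟩_H for all y, z ∈ H, and positive definite, i.e. ⟨T y, y⟩_H > 0 for every y ≠ 0; in particular T is injective. -/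
open scoped RealInnerProductSpace

theorem aux_dense_zero {V H : Type*}
    [NormedAddCommGroup V] [InnerProductSpace ℝ V]
    [NormedAddCommGroup H] [InnerProductSpace ℝ H]
    (j : V →L[ℝ] H) (hjdense : DenseRange j) (y : H)
    (h : ∀ u : V, ⟪y, j u⟫ = 0) : y = 0 := by
  have hy : ⟪y, y⟫ = 0 := by
    refine hjdense.induction_on (p := fun w => ⟪y, w⟫ = 0) y ?_ h
    exact isClosed_eq (continuous_const.inner continuous_id) continuous_const
  simpa using inner_self_eq_zero.mp hy

/-- Properties of the solution operator: if `j` is injective with dense range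
and `T : H → H` sends each `y` to `j x` where `x` weakly solves
`a(x,·) + ω⟨jx, j·⟩ = ⟨y, j·⟩`, then `T` is symmetric and positive definite;
in particular `T` is injective. -/
theorem stmt4 {V H : Type*}
    [NormedAddCommGroup V] [InnerProductSpace ℝ V] [CompleteSpace V]
    [NormedAddCommGroup H] [InnerProductSpace ℝ H] [CompleteSpace H]
    (j : V →L[ℝ] H) (hjinj : Function.Injective j) (hjdense : DenseRange j)
    (a : V →L[ℝ] V →L[ℝ] ℝ) (hsymm : ∀ u v : V, a u v = a v u)
    (ω c : ℝ) (hc : 0 < c)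
    (hell : ∀ u : V, c * ‖u‖ ^ 2 ≤ a u u + ω * ⟪j u, j u⟫)
    (T : H → H)
    (hT : ∀ y : H, ∃ x : V, T y = j x ∧
      ∀ u : V, a x u + ω * ⟪j x, j u⟫ = ⟪y, j u⟫) :
    (∀ y z : H, ⟪T y, z⟫ = ⟪y, T z⟫) ∧
      (∀ y : H, y ≠ 0 → 0 < ⟪T y, y⟫) ∧
      Function.Injective T := by
  have key : ∀ y z : H, ⟪T y, z⟫ = ⟪y, T z⟫ := by
    intro y z
    obtain ⟨x, hx, hwx⟩ := hT y
    obtain ⟨x', hx', hwx'⟩ := hT z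
    calc ⟪T y, z⟫ = ⟪z, j x⟫ := by rw [hx, real_inner_comm]
      _ = a x' x + ω * ⟪j x', j x⟫ := (hwx' x).symm
      _ = a x x' + ω * ⟪j x, j x'⟫ := by rw [hsymm, real_inner_comm]
      _ = ⟪y, j x'⟫ := hwx x'
      _ = ⟪y, T z⟫ := by rw [hx']
  refine ⟨key, ?_, ?_⟩
  · intro y hy
    obtain ⟨x, hx, hwx⟩ := hT y
    have hpos : ⟪T y, y⟫ = a x x + ω * ⟪j x, j x⟫ := by
      rw [hx, real_inner_comm, ← hwx x]
    have h0 : 0 ≤ ⟪T y, y⟫ := by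
      rw [hpos]
      exact le_trans (by positivity) (hell x)
    rcases h0.lt_or_eq with h | h
    · exact h
    · exfalso
      have hx0 : x = 0 := by
        have := hell x
        rw [← hpos, ← h] at this
        have : ‖x‖ ^ 2 ≤ 0 := by nlinarith
        have : ‖x‖ = 0 := by nlinarith [sq_nonneg ‖x‖, norm_nonneg x]
        simpa using this
      apply hy
      refine aux_dense_zero j hjdense y (fun u => ?_)
      have := hwx u
      simp [hx0] at this
      linarith [this]
  · intro y z hyz
    obtain ⟨x, hx, hwx⟩ := hT y
    obtain ⟨x', hx', hwx'⟩ := hT z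
    have hxx : x = x' := hjinj (by rw [← hx, ← hx', hyz])
    have : ∀ u : V, ⟪y - z, j u⟫ = 0 := by
      intro u
      rw [inner_sub_left, ← hwx u, hxx, hwx' u, sub_self]
    have := aux_dense_zero j hjdense _ this
    exact sub_eq_zero.mp this
end

section
/- Let V and H be real Hilbert spaces with H infinite-dimensional and separable, let j : V → H be an injective compact continuous linear map with dense range, let a : V × V → ℝ be a continuous symmetric bilinear form, and let ω ∈ ℝ, c > 0 satisfy a(u,u) + ω⟨j u, j u⟩_H ≥ c‖u‖_V² for all u ∈ V. Then there exist a Hilbert (orthonormal) basis (e_k)_{k∈ℕ} of H, a sequence (ψ_k)_{k∈ℕ} in V with j ψ_k = e_k for every k, and a nondecreasing sequence of real numbers (λ_k)_{k∈ℕ} with λ_k → +∞, such that a(ψ_k, u) = λ_k ⟨e_k, j u⟩_H for all u ∈ V and all k ∈ ℕ. -/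
/-!
Shifting `a` by `ω ⟪j ·, j ·⟫` gives a coercive symmetric form `B`. By Lax–Milgram there is
`T : H →L V` with `B (T f) v = ⟪f, j v⟫`, and `S = j ∘ T` is a compact, symmetric, positive
definite operator on `H`. Its eigenvectors are found greedily: on the orthogonal complement of
the eigenvectors found so far (closed, `S`-invariant, and nonzero because `H` is
infinite-dimensional) the spectral radius of the restriction of `S` is an eigenvalue and the
maximum of the Rayleigh quotient, so the eigenvalues `μ k` decrease. A compact operator maps
orthonormal sequences to null sequences, so `μ k → 0`; a vector orthogonal to every eigenvector
then has `⟪S x, x⟫ ≤ μ k ‖x‖² → 0` and vanishes. Finally `ψ k = (μ k)⁻¹ • T (e k)` and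
`Λ k = (μ k)⁻¹ - ω`.
-/

open scoped RealInnerProductSpace
open Filter Topology Module.End

theorem Orthonormal.tendsto_inner_atTop {E : Type*} [NormedAddCommGroup E] [InnerProductSpace ℝ E]
    {e : ℕ → E} (he : Orthonormal ℝ e) (x : E) : Tendsto (fun n => ⟪e n, x⟫) atTop (𝓝 0) := by
  have := (he.inner_products_summable x).tendsto_atTop_zero
  rw [tendsto_zero_iff_norm_tendsto_zero]
  simpa [Real.sqrt_sq_eq_abs] using this.sqrt

theorem IsCompactOperator.tendsto_apply_orthonormal {E F : Type*}
    [NormedAddCommGroup E] [InnerProductSpace ℝ E] [CompleteSpace E]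
    [NormedAddCommGroup F] [InnerProductSpace ℝ F] [CompleteSpace F]
    {T : E →L[ℝ] F} (hT : IsCompactOperator T) {e : ℕ → E} (he : Orthonormal ℝ e) :
    Tendsto (fun n => T (e n)) atTop (𝓝 0) := by
  refine tendsto_of_subseq_tendsto fun ns hns => ?_
  obtain ⟨y, -, ms, hms, hy⟩ := (hT.isCompact_closure_image_closedBall 1).tendsto_subseq
    (x := fun n => T (e (ns n))) fun n => subset_closure ⟨e (ns n), by simp [he.1], rfl⟩
  refine ⟨ms, ?_⟩
  have hweak : Tendsto (fun n => ⟪T (e (ns (ms n))), y⟫) atTop (𝓝 0) := by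
    simp_rw [← ContinuousLinearMap.adjoint_inner_right]
    exact (he.tendsto_inner_atTop _).comp (hns.comp hms.tendsto_atTop)
  have hy0 : y = 0 :=
    inner_self_eq_zero.1 (tendsto_nhds_unique (hy.inner tendsto_const_nhds) hweak)
  rwa [hy0] at hy

theorem IsCompactOperator.exists_hasEigenvalue_abs_eq_norm {E : Type*}
    [NormedAddCommGroup E] [InnerProductSpace ℝ E] [CompleteSpace E] [Nontrivial E]
    {T : E →L[ℝ] E} (hT : IsCompactOperator T) (hTsa : IsSelfAdjoint T) :
    ∃ μ : ℝ, |μ| = ‖T‖ ∧ HasEigenvalue (T : Module.End ℝ E) μ := by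
  rcases eq_or_ne T 0 with rfl | hT0
  · refine ⟨0, by simp, ?_⟩
    rw [hasEigenvalue_iff, eigenspace_zero]
    simp
  have hρ : spectralRadius ℝ T = ‖T‖₊ := T.spectralRadius_eq_nnnorm hTsa
  have hσ : (spectrum ℝ T).Nonempty := by
    by_contra h
    rw [Set.not_nonempty_iff_eq_empty] at h
    simp only [spectralRadius, h, Set.mem_empty_iff_false, iSup_false, iSup_const, bot_eq_zero',
      eq_comm (a := (0 : ENNReal)), ENNReal.coe_eq_zero, nnnorm_eq_zero] at hρ
    exact hT0 hρ
  obtain ⟨μ, hμσ, hμ⟩ : ∃ μ ∈ spectrum ℝ T, |μ| = ‖T‖ := by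
    rcases Real.spectralRadius_mem_spectrum_or hσ with h | h
    · exact ⟨_, h, by simp [hρ]⟩
    · exact ⟨_, h, by simp [hρ]⟩
  refine ⟨μ, hμ, (hT.hasEigenvalue_iff_mem_spectrum ?_).2 hμσ⟩
  rintro rfl
  exact hT0 (norm_eq_zero.1 (by simpa using hμ.symm))

section TopEigenvector

variable {H : Type*} [NormedAddCommGroup H] [InnerProductSpace ℝ H]

structure IsTopEigenvectorOn (S : H →L[ℝ] H) (K : Submodule ℝ H) (e : H) : Prop where
  mem : e ∈ K
  norm_eq_one : ‖e‖ = 1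
  apply_eq : S e = ⟪S e, e⟫ • e
  inner_apply_self_le : ∀ x ∈ K, ⟪S x, x⟫ ≤ ⟪S e, e⟫ * ‖x‖ ^ 2

variable [CompleteSpace H] {S : H →L[ℝ] H}

theorem exists_isTopEigenvectorOn (hS : IsCompactOperator S)
    (hSsym : (S : H →ₗ[ℝ] H).IsSymmetric) (hSpos : ∀ x, x ≠ 0 → 0 < ⟪S x, x⟫)
    {K : Submodule ℝ H} (hKc : IsClosed (K : Set H)) (hKS : ∀ x ∈ K, S x ∈ K) (hK : K ≠ ⊥) :
    ∃ e, IsTopEigenvectorOn S K e := by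
  have : CompleteSpace K := hKc.completeSpace_coe
  have : Nontrivial K := Submodule.nontrivial_iff_ne_bot.mpr hK
  set SK : K →L[ℝ] K := S.restrict hKS
  have hSKsym : (SK : K →ₗ[ℝ] K).IsSymmetric := hSsym.restrict_invariant hKS
  obtain ⟨μ, hμ, hμeig⟩ :=
    (hS.restrict' hKS).exists_hasEigenvalue_abs_eq_norm hSKsym.isSelfAdjoint
  obtain ⟨v, hv⟩ := hμeig.exists_hasEigenvector
  have hv0 : (v : H) ≠ 0 := by simpa using hv.2
  set e : H := ‖(v : H)‖⁻¹ • (v : H)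
  have he : ‖e‖ = 1 := norm_smul_inv_norm hv0
  have hSe : S e = μ • e := by
    have : S v = μ • (v : H) := congrArg Subtype.val (mem_eigenspace_iff.1 hv.1)
    simp only [e, map_smul, this, smul_comm μ]
  have hSee : ⟪S e, e⟫ = μ := by
    rw [hSe, real_inner_smul_left, real_inner_self_eq_norm_sq, he]; ring
  have hμSK : μ = ‖SK‖ := by
    rw [← hμ, abs_of_pos (hSee ▸ hSpos e (by simp [← norm_ne_zero_iff, he]))]
  refine ⟨e, K.smul_mem _ v.2, he, hSee ▸ hSe, fun x hx => ?_⟩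
  calc ⟪S x, x⟫ ≤ ‖S x‖ * ‖x‖ := real_inner_le_norm _ _
    _ = ‖SK ⟨x, hx⟩‖ * ‖(⟨x, hx⟩ : K)‖ := rfl
    _ ≤ ‖SK‖ * ‖(⟨x, hx⟩ : K)‖ * ‖(⟨x, hx⟩ : K)‖ := by gcongr; exact SK.le_opNorm _
    _ = ⟪S e, e⟫ * ‖x‖ ^ 2 := by rw [hSee, hμSK]; simp; ring

end TopEigenvector

section EigenFlag

variable {H : Type*} [NormedAddCommGroup H] [InnerProductSpace ℝ H]

noncomputable def topEigenvectorOn (S : H →L[ℝ] H) (K : Submodule ℝ H) : H :=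
  Classical.epsilon (IsTopEigenvectorOn S K)

noncomputable def eigenFlag (S : H →L[ℝ] H) : ℕ → Submodule ℝ H
  | 0 => ⊤
  | n + 1 => eigenFlag S n ⊓ (ℝ ∙ topEigenvectorOn S (eigenFlag S n))ᗮ

noncomputable def eigenSeq (S : H →L[ℝ] H) (n : ℕ) : H :=
  topEigenvectorOn S (eigenFlag S n)

variable {S : H →L[ℝ] H}

theorem mem_eigenFlag_iff {n : ℕ} {x : H} :
    x ∈ eigenFlag S n ↔ ∀ i < n, ⟪eigenSeq S i, x⟫ = 0 := by
  induction n with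
  | zero => simp [eigenFlag]
  | succ n ih =>
    simp only [eigenFlag, Submodule.mem_inf, ih,
      Submodule.mem_orthogonal_singleton_iff_inner_right, Nat.lt_succ_iff_lt_or_eq, or_imp,
      forall_and, forall_eq]
    rfl

theorem eigenFlag_antitone : Antitone (eigenFlag S) :=
  antitone_nat_of_succ_le fun _ => inf_le_left

theorem isClosed_eigenFlag (n : ℕ) : IsClosed (eigenFlag S n : Set H) := by
  induction n with
  | zero => exact isClosed_univ
  | succ n ih => exact ih.inter (Submodule.isClosed_orthogonal _)

theorem eigenFlag_ne_bot (hinf : ¬ FiniteDimensional ℝ H) (n : ℕ) : eigenFlag S n ≠ ⊥ := by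
  intro hbot
  set W := Submodule.span ℝ (Set.range fun i : Fin n => eigenSeq S i)
  have hW : Wᗮ = ⊥ := eq_bot_iff.2 fun x hx => hbot ▸ mem_eigenFlag_iff.2 fun i hi =>
    (W.mem_orthogonal x).1 hx _ (Submodule.subset_span ⟨⟨i, hi⟩, rfl⟩)
  have : FiniteDimensional ℝ W := FiniteDimensional.span_of_finite ℝ (Set.finite_range _)
  refine hinf (Module.finite_def.2 ?_)
  rw [← Submodule.orthogonal_eq_bot_iff.1 hW]
  exact Submodule.fg_span (Set.finite_range _)

variable [CompleteSpace H]

theorem isTopEigenvectorOn_eigenSeq (hS : IsCompactOperator S)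
    (hSsym : (S : H →ₗ[ℝ] H).IsSymmetric) (hSpos : ∀ x, x ≠ 0 → 0 < ⟪S x, x⟫)
    (hinf : ¬ FiniteDimensional ℝ H) (n : ℕ) :
    IsTopEigenvectorOn S (eigenFlag S n) (eigenSeq S n) := by
  induction n using Nat.strong_induction_on with
  | _ n ih =>
    have hinv : ∀ x ∈ eigenFlag S n, S x ∈ eigenFlag S n := by
      intro x hx
      refine mem_eigenFlag_iff.2 fun i hi => ?_
      have hsym : ⟪S (eigenSeq S i), x⟫ = ⟪eigenSeq S i, S x⟫ := hSsym _ _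
      rw [← hsym, (ih i hi).apply_eq, real_inner_smul_left, mem_eigenFlag_iff.1 hx i hi, mul_zero]
    exact Classical.epsilon_spec (exists_isTopEigenvectorOn hS hSsym hSpos
      (isClosed_eigenFlag n) hinv (eigenFlag_ne_bot hinf n))

theorem exists_hilbertBasis_eigenvectors (hS : IsCompactOperator S)
    (hSsym : (S : H →ₗ[ℝ] H).IsSymmetric) (hSpos : ∀ x, x ≠ 0 → 0 < ⟪S x, x⟫)
    (hinf : ¬ FiniteDimensional ℝ H) :
    ∃ (e : HilbertBasis ℕ ℝ H) (μ : ℕ → ℝ), Antitone μ ∧ (∀ n, 0 < μ n) ∧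
      Tendsto μ atTop (𝓝 0) ∧ ∀ n, S (e n) = μ n • e n := by
  have htop := isTopEigenvectorOn_eigenSeq hS hSsym hSpos hinf
  set e := eigenSeq S
  set μ := fun n => ⟪S (e n), e n⟫
  have he : Orthonormal ℝ e := by
    refine ⟨fun n => (htop n).norm_eq_one, fun m n hmn => ?_⟩
    rcases hmn.lt_or_gt with h | h
    · exact mem_eigenFlag_iff.1 (htop n).mem m h
    · rw [real_inner_comm]
      exact mem_eigenFlag_iff.1 (htop m).mem n h
  have hμ : Antitone μ := antitone_nat_of_succ_le fun n => by
    simpa [(htop (n + 1)).norm_eq_one] using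
      (htop n).inner_apply_self_le _ (eigenFlag_antitone n.le_succ (htop (n + 1)).mem)
  have hμpos : ∀ n, 0 < μ n := fun n => hSpos _ (he.ne_zero n)
  have hμlim : Tendsto μ atTop (𝓝 0) := by
    have hnorm : ∀ n, ‖S (e n)‖ = μ n := fun n => by
      rw [(htop n).apply_eq, norm_smul, he.1, mul_one, Real.norm_of_nonneg (hμpos n).le]
    simpa [hnorm] using (hS.tendsto_apply_orthonormal he).norm
  have hspan : (Submodule.span ℝ (Set.range e))ᗮ = ⊥ := by
    refine eq_bot_iff.2 fun x hx => ?_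
    have hxK : ∀ n, x ∈ eigenFlag S n := fun n => mem_eigenFlag_iff.2 fun i _ =>
      (Submodule.mem_orthogonal _ x).1 hx _ (Submodule.subset_span ⟨i, rfl⟩)
    have hSx : ⟪S x, x⟫ ≤ 0 := ge_of_tendsto' (by simpa using hμlim.mul_const (‖x‖ ^ 2))
      fun n => (htop n).inner_apply_self_le x (hxK n)
    by_contra hx0
    exact (hSpos x hx0).not_ge hSx
  refine ⟨HilbertBasis.mkOfOrthogonalEqBot he hspan, μ, hμ, hμpos, hμlim, fun n => ?_⟩
  rw [HilbertBasis.coe_mkOfOrthogonalEqBot]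
  exact (htop n).apply_eq

end EigenFlag

section SolutionOperator

variable {V H : Type*} [NormedAddCommGroup V] [InnerProductSpace ℝ V]
  [NormedAddCommGroup H] [InnerProductSpace ℝ H]

theorem IsCoercive.exists_forall_apply_eq_inner [CompleteSpace V] [CompleteSpace H]
    {B : V →L[ℝ] V →L[ℝ] ℝ} (hB : IsCoercive B) (j : V →L[ℝ] H) :
    ∃ T : H →L[ℝ] V, ∀ f v, B (T f) v = ⟪f, j v⟫ := by
  set E := hB.continuousLinearEquivOfBilin
  refine ⟨(E.symm : V →L[ℝ] V) ∘L ContinuousLinearMap.adjoint j, fun f v => ?_⟩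
  rw [← hB.continuousLinearEquivOfBilin_apply, ContinuousLinearMap.comp_apply,
    ContinuousLinearEquiv.coe_coe, E.apply_symm_apply, ContinuousLinearMap.adjoint_inner_left]

variable {j : V →L[ℝ] H} {B : V →L[ℝ] V →L[ℝ] ℝ} {T : H →L[ℝ] V}

theorem inner_comp_apply_eq (hT : ∀ f v, B (T f) v = ⟪f, j v⟫) (f g : H) :
    ⟪(j ∘L T) f, g⟫ = B (T g) (T f) := by
  rw [hT, real_inner_comm, ContinuousLinearMap.comp_apply]

theorem isSymmetric_comp (hT : ∀ f v, B (T f) v = ⟪f, j v⟫) (hB : ∀ u v, B u v = B v u) :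
    ((j ∘L T : H →L[ℝ] H) : H →ₗ[ℝ] H).IsSymmetric := fun f g => by
  rw [ContinuousLinearMap.coe_coe, inner_comp_apply_eq hT,
    real_inner_comm, inner_comp_apply_eq hT, hB]

theorem inner_comp_apply_self_pos [CompleteSpace H] (hT : ∀ f v, B (T f) v = ⟪f, j v⟫)
    (hB : IsCoercive B) (hj : DenseRange j) {f : H} (hf : f ≠ 0) : 0 < ⟪(j ∘L T) f, f⟫ := by
  have hTf : T f ≠ 0 := by
    intro hTf
    have hperp : f ∈ (LinearMap.range (j : V →ₗ[ℝ] H))ᗮ := by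
      rintro _ ⟨v, rfl⟩
      change ⟪j v, f⟫ = 0
      rw [real_inner_comm, ← hT, hTf, map_zero, zero_apply]
    have hdense : (LinearMap.range (j : V →ₗ[ℝ] H)).topologicalClosure = ⊤ :=
      Submodule.dense_iff_topologicalClosure_eq_top.1 hj
    rw [Submodule.topologicalClosure_eq_top_iff.1 hdense] at hperp
    exact hf hperp
  obtain ⟨C, hC, hcoer⟩ := hB
  rw [inner_comp_apply_eq hT]
  exact lt_of_lt_of_le (by positivity) (hcoer (T f))

end SolutionOperator

theorem stmt5_general {V H : Type*}
    [NormedAddCommGroup V] [InnerProductSpace ℝ V] [CompleteSpace V]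
    [NormedAddCommGroup H] [InnerProductSpace ℝ H] [CompleteSpace H]
    (hinf : ¬ FiniteDimensional ℝ H)
    (j : V →L[ℝ] H) (hjcompact : IsCompactOperator j)
    (hjdense : DenseRange j)
    (a : V →L[ℝ] V →L[ℝ] ℝ) (hsymm : ∀ u v : V, a u v = a v u)
    (ω c : ℝ) (hc : 0 < c)
    (hell : ∀ u : V, c * ‖u‖ ^ 2 ≤ a u u + ω * ⟪j u, j u⟫) :
    ∃ (e : HilbertBasis ℕ ℝ H) (ψ : ℕ → V) (Λ : ℕ → ℝ),
      Monotone Λ ∧ Filter.Tendsto Λ Filter.atTop Filter.atTop ∧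
      ∀ k : ℕ, j (ψ k) = e k ∧
        ∀ u : V, a (ψ k) u = Λ k * ⟪e k, j u⟫ := by
  set q : V →L[ℝ] V →L[ℝ] ℝ := (innerSL ℝ).bilinearComp j j
  set B : V →L[ℝ] V →L[ℝ] ℝ := a + ω • q
  have hBapply : ∀ u v, B u v = a u v + ω * ⟪j u, j v⟫ := fun _ _ => rfl
  have hBsymm : ∀ u v, B u v = B v u := fun u v => by
    rw [hBapply, hBapply, hsymm, real_inner_comm]
  have hBcoer : IsCoercive B := ⟨c, hc, fun u => by nlinarith [hell u, hBapply u u]⟩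
  obtain ⟨T, hT⟩ := hBcoer.exists_forall_apply_eq_inner j
  obtain ⟨e, μ, hμanti, hμpos, hμlim, heig⟩ := exists_hilbertBasis_eigenvectors
    (hjcompact.comp_clm T) (isSymmetric_comp hT hBsymm)
    (fun _ => inner_comp_apply_self_pos hT hBcoer hjdense) hinf
  refine ⟨e, fun k => (μ k)⁻¹ • T (e k), fun k => (μ k)⁻¹ - ω,
    fun k l hkl => sub_le_sub_right (inv_anti₀ (hμpos l) (hμanti hkl)) ω,
    tendsto_atTop_add_const_right _ (-ω)
      (tendsto_nhdsWithin_iff.2 ⟨hμlim, .of_forall hμpos⟩).inv_tendsto_nhdsGT_zero,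
    fun k => ?_⟩
  have hψ : j ((μ k)⁻¹ • T (e k)) = e k := by
    rw [map_smul, ← ContinuousLinearMap.comp_apply, heig, smul_smul,
      inv_mul_cancel₀ (hμpos k).ne', one_smul]
  refine ⟨hψ, fun u => ?_⟩
  have hB := hBapply ((μ k)⁻¹ • T (e k)) u
  rw [hψ, map_smul, smul_apply, hT, smul_eq_mul] at hB
  linarith

/-- Abstract discrete spectrum (core of Theorem A.3): an `H`-elliptic
continuous symmetric bilinear form `a` on `V`, with `j : V → H` compact,
injective and with dense range, and `H` infinite-dimensional separable,
admits an orthonormal (Hilbert) basis `(e_k)` of `H` of eigenvectors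
`e_k = j ψ_k` with nondecreasing eigenvalues `λ_k → +∞`:
`a(ψ_k, u) = λ_k ⟨e_k, j u⟩` for all `u`. -/
theorem stmt5 {V H : Type*}
    [NormedAddCommGroup V] [InnerProductSpace ℝ V] [CompleteSpace V]
    [NormedAddCommGroup H] [InnerProductSpace ℝ H] [CompleteSpace H]
    [TopologicalSpace.SeparableSpace H] (hinf : ¬ FiniteDimensional ℝ H)
    (j : V →L[ℝ] H) (hjcompact : IsCompactOperator j)
    (hjinj : Function.Injective j) (hjdense : DenseRange j)
    (a : V →L[ℝ] V →L[ℝ] ℝ) (hsymm : ∀ u v : V, a u v = a v u)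
    (ω c : ℝ) (hc : 0 < c)
    (hell : ∀ u : V, c * ‖u‖ ^ 2 ≤ a u u + ω * ⟪j u, j u⟫) :
    ∃ (e : HilbertBasis ℕ ℝ H) (ψ : ℕ → V) (Λ : ℕ → ℝ),
      Monotone Λ ∧ Filter.Tendsto Λ Filter.atTop Filter.atTop ∧
      ∀ k : ℕ, j (ψ k) = e k ∧
        ∀ u : V, a (ψ k) u = Λ k * ⟪e k, j u⟫ :=
  stmt5_general hinf j hjcompact hjdense a hsymm ω c hc hell
end
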